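/- arXiv:2506.23578 — 2 statements merged into one kernel-verified Lean document; each statement's English description precedes it below -/
import Mathlib

section
/- Let X be a finite set of vectors in ℤ^d and let b be in the integer cone of X, i.e., b is a finite sum Σ λ_k x_k with x_k in X and λ_k positive integers. Then there exists a subset X' ⊆ X with |X'| ≤ 2d · log₂(4d · ‖X‖) such that b lies in the integer cone of X', where ‖X‖ = max over x in X of the maximum absolute value of coordinates of x. -/
/-- The integer cone of a finite set of integer vectors: all sums
`λ₁x₁ + ... + λ_t x_t` with `x_i ∈ X` and `λ_i` positive integers
(equivalently, nonnegative integer coefficients supported on `X`). -/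
def intCone {d : ℕ} (X : Finset (Fin d → ℤ)) : Set (Fin d → ℤ) :=
  { b | ∃ lam : (Fin d → ℤ) → ℕ, b = ∑ x ∈ X, (lam x : ℤ) • x }

/-- The norm of a finite set of integer vectors: the maximum over `x ∈ X`
of the maximal absolute value of a coordinate of `x`. -/
def setNorm {d : ℕ} (X : Finset (Fin d → ℤ)) : ℕ :=
  X.sup fun v => Finset.univ.sup fun i => (v i).natAbs

open Finset in
/-- swap lemma: if two disjoint subsets of `X'` have equal sums and the first is
nonempty, then some element can be erased from `X'` keeping `b` in the cone. -/
lemma erase_of_swap {d : ℕ} (X' : Finset (Fin d → ℤ)) (b : Fin d → ℤ)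
    (lam : (Fin d → ℤ) → ℕ) (hb : b = ∑ x ∈ X', (lam x : ℤ) • x)
    (A B : Finset (Fin d → ℤ)) (hA : A ⊆ X') (hB : B ⊆ X')
    (hdisj : Disjoint A B) (hne : A.Nonempty)
    (hsum : ∑ x ∈ A, x = ∑ x ∈ B, x) :
    ∃ x₀ ∈ X', b ∈ intCone (X'.erase x₀) := by
  classical
  obtain ⟨x₀, hx₀A, hx₀min⟩ := A.exists_min_image lam hne
  set m := lam x₀ with hm
  refine ⟨x₀, hA hx₀A, ?_⟩
  set lam' : (Fin d → ℤ) → ℕ :=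
    fun x => if x ∈ A then lam x - m else if x ∈ B then lam x + m else lam x with hlam'
  have hval : ∀ x ∈ A ∪ B ∪ X',
      (lam' x : ℤ) = (lam x : ℤ) + (if x ∈ A then -(m:ℤ) else if x ∈ B then (m:ℤ) else 0) := by
    intro x _
    by_cases hxA : x ∈ A
    · have h1 : m ≤ lam x := hx₀min x hxA
      simp only [hlam', if_pos hxA]
      omega
    · by_cases hxB : x ∈ B
      · simp only [hlam', if_neg hxA, if_pos hxB]
        push_cast; ring
      · simp [hlam', hxA, hxB]
  have hsum' : ∑ x ∈ X', (lam' x : ℤ) • x = b := by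
    have expand : ∑ x ∈ X', (lam' x : ℤ) • x
        = ∑ x ∈ X', (lam x : ℤ) • x
          + ∑ x ∈ X', (if x ∈ A then -(m:ℤ) else if x ∈ B then (m:ℤ) else 0) • x := by
      rw [← Finset.sum_add_distrib]
      refine Finset.sum_congr rfl fun x hx => ?_
      rw [hval x (by simp [hx]), add_smul]
    have hdelta : ∑ x ∈ X', (if x ∈ A then -(m:ℤ) else if x ∈ B then (m:ℤ) else 0) • x
        = (-(m:ℤ)) • ∑ x ∈ A, x + (m:ℤ) • ∑ x ∈ B, x := by
      rw [← Finset.sum_subset (Finset.union_subset hA hB) (by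
        intro x hx hnx
        have hxA : x ∉ A := fun h => hnx (Finset.mem_union_left _ h)
        have hxB : x ∉ B := fun h => hnx (Finset.mem_union_right _ h)
        simp [hxA, hxB])]
      rw [Finset.sum_union hdisj, Finset.smul_sum, Finset.smul_sum]
      congr 1
      · exact Finset.sum_congr rfl fun x hx => by simp [hx]
      · refine Finset.sum_congr rfl fun x hx => ?_
        have hxA : x ∉ A := Finset.disjoint_right.mp hdisj hx
        simp [hxA, hx]
    rw [expand, hdelta, hsum, ← hb]
    rw [neg_smul]
    abel
  refine ⟨lam', ?_⟩
  have hz : lam' x₀ = 0 := by simp [hlam', hx₀A, hm]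
  have : ∑ x ∈ X', (lam' x : ℤ) • x
      = (lam' x₀ : ℤ) • x₀ + ∑ x ∈ X'.erase x₀, (lam' x : ℤ) • x :=
    (Finset.add_sum_erase X' _ (hA hx₀A)).symm
  rw [hsum', hz] at this
  simpa using this

lemma logb_two_le (n : ℝ) (hn : 1 ≤ n) : Real.logb 2 n ≤ 2 * (n - 1) := by
  rw [Real.logb, div_le_iff₀ (Real.log_pos (by norm_num))]
  have h1 : Real.log n ≤ n - 1 := Real.log_le_sub_one_of_pos (by linarith)
  have h2 : (0.6931471803 : ℝ) < Real.log 2 := Real.log_two_gt_d9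
  nlinarith

lemma logb_four_mul (n : ℝ) (hn : 1 ≤ n) : Real.logb 2 (4 * n) = 2 + Real.logb 2 n := by
  rw [Real.logb_mul (by norm_num) (by linarith)]
  congr 1
  rw [show (4:ℝ) = 2 ^ (2:ℕ) by norm_num, Real.logb_pow, Real.logb_self_eq_one (by norm_num)]
  norm_num

/-- The real analysis step. -/
lemma real_step (d M t : ℝ) (hd : 1 ≤ d) (hM : 1 ≤ M) (ht : 1 ≤ t)
    (h : t ≤ d * Real.logb 2 (4 * (t * M))) :
    t ≤ 2 * d * Real.logb 2 (4 * d * M) := by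
  set L := Real.logb 2 (4 * d * M) with hL
  have hdM : 1 ≤ d * M := by nlinarith
  have hL2 : 2 ≤ L := by
    have : Real.logb 2 (4 * (d * M)) = 2 + Real.logb 2 (d * M) := logb_four_mul _ hdM
    have h0 : 0 ≤ Real.logb 2 (d * M) := Real.logb_nonneg (by norm_num) hdM
    rw [hL, mul_assoc]
    linarith
  have hLle : L ≤ 2 * (d * M) := by
    have := logb_two_le (d * M) hdM
    have : Real.logb 2 (4 * (d * M)) = 2 + Real.logb 2 (d * M) := logb_four_mul _ hdM
    have h2 := logb_two_le (d * M) hdM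
    rw [hL, mul_assoc, this]
    nlinarith
  set t0 := 2 * d * L with ht0
  have ht04d : 4 * d ≤ t0 := by nlinarith
  by_contra hc
  push_neg at hc  -- t0 < t
  have ht0pos : 0 < t0 := by nlinarith
  set s := t / t0 with hs
  have hs1 : 1 < s := (one_lt_div ht0pos).mpr hc
  have hts : t = t0 * s := by rw [hs, mul_div_assoc']; exact (mul_div_cancel_left₀ t ht0pos.ne').symm
  -- logb 2 (4 t M) = logb 2 (4 t0 M) + logb 2 s
  have hsplit : Real.logb 2 (4 * (t * M)) = Real.logb 2 (4 * (t0 * M)) + Real.logb 2 s := by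
    rw [← Real.logb_mul (by nlinarith) (by nlinarith)]
    congr 1
    rw [hts]; ring
  -- logb 2 (4 t0 M) ≤ 2L since 4 t0 M = 8 d L M ≤ (4dM)^2
  have hb1 : Real.logb 2 (4 * (t0 * M)) ≤ 2 * L := by
    have harg : 4 * (t0 * M) ≤ (4 * d * M) ^ (2:ℕ) := by
      rw [ht0]; nlinarith
    have hmono : Real.logb 2 (4 * (t0 * M)) ≤ Real.logb 2 ((4 * d * M) ^ (2:ℕ)) :=
      Real.logb_le_logb_of_le (by norm_num) (by nlinarith) harg
    rw [Real.logb_pow] at hmono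
    push_cast at hmono
    linarith [hmono]
  have hb2 : Real.logb 2 s ≤ 2 * (s - 1) := logb_two_le s (le_of_lt hs1)
  -- combine
  have hchain : t ≤ t0 + 2 * d * (s - 1) := by
    calc t ≤ d * Real.logb 2 (4 * (t * M)) := h
      _ = d * (Real.logb 2 (4 * (t0 * M)) + Real.logb 2 s) := by rw [hsplit]
      _ ≤ d * (2 * L + 2 * (s - 1)) := by
          apply mul_le_mul_of_nonneg_left _ (by linarith)
          linarith
      _ = t0 + 2 * d * (s - 1) := by rw [ht0]; ring
  -- 2 d (s-1) = 2 d (t - t0)/t0 ≤ (t - t0)/2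
  have hfin : 2 * d * (s - 1) ≤ (t - t0) / 2 := by
    have key : t - t0 = t0 * (s - 1) := by rw [hts]; ring
    nlinarith [key, ht04d, hs1, hd]
  nlinarith


/-- integer Carathéodory theorem: if `b ∈ intcone X` then
`b ∈ intcone X'` for some `X' ⊆ X` with `|X'| ≤ 2d·log₂(4d·‖X‖)`. -/
theorem integer_caratheodory {d : ℕ} (X : Finset (Fin d → ℤ))
    (hX : 1 ≤ setNorm X) (b : Fin d → ℤ) (hb : b ∈ intCone X) :
    ∃ X' ⊆ X, (X'.card : ℝ) ≤ 2 * d * Real.logb 2 (4 * d * setNorm X) ∧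
      b ∈ intCone X' := by
  classical
  set M := setNorm X with hMdef
  have hd : 1 ≤ d := by
    by_contra h
    have hd0 : d = 0 := by omega
    subst hd0
    have : setNorm X = 0 := by
      unfold setNorm
      simp
    omega
  -- choose minimal X'
  obtain ⟨X', hX'mem, hmin⟩ :=
    (X.powerset.filter (fun Y => b ∈ intCone Y)).exists_min_image Finset.card
      ⟨X, by simp [hb]⟩
  rw [Finset.mem_filter, Finset.mem_powerset] at hX'mem
  obtain ⟨hX'X, hbX'⟩ := hX'mem
  refine ⟨X', hX'X, ?_, hbX'⟩
  obtain ⟨lam, hlam⟩ := hbX'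
  -- no element can be erased
  have hnoerase : ∀ x₀ ∈ X', b ∉ intCone (X'.erase x₀) := by
    intro x₀ hx₀ hbe
    have hmem : X'.erase x₀ ∈ X.powerset.filter (fun Y => b ∈ intCone Y) := by
      rw [Finset.mem_filter, Finset.mem_powerset]
      exact ⟨(Finset.erase_subset _ _).trans hX'X, hbe⟩
    have := hmin _ hmem
    have : X'.card ≤ (X'.erase x₀).card := this
    rw [Finset.card_erase_of_mem hx₀] at this
    have hpos : 0 < X'.card := Finset.card_pos.mpr ⟨x₀, hx₀⟩
    omega
  set t := X'.card with htdef
  -- injectivity of subset sums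
  have hinj : ∀ S ∈ X'.powerset, ∀ T ∈ X'.powerset,
      (∑ x ∈ S, x) = (∑ x ∈ T, x) → S = T := by
    intro S hS T hT hsum
    rw [Finset.mem_powerset] at hS hT
    by_contra hne
    have hST : ∑ x ∈ S \ T, x = ∑ x ∈ T \ S, x := by
      have h1 := Finset.sum_inter_add_sum_sdiff S T (fun x => x)
      have h2 := Finset.sum_inter_add_sum_sdiff T S (fun x => x)
      rw [Finset.inter_comm] at h2
      have : (∑ x ∈ S ∩ T, x) + (∑ x ∈ S \ T, x) = (∑ x ∈ S ∩ T, x) + (∑ x ∈ T \ S, x) := by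
        rw [h1, h2, hsum]
      exact add_left_cancel this
    have hdisj : Disjoint (S \ T) (T \ S) := disjoint_sdiff_sdiff
    rcases Finset.eq_empty_or_nonempty (S \ T) with hA | hA
    · rcases Finset.eq_empty_or_nonempty (T \ S) with hB | hB
      · exact hne (Finset.Subset.antisymm
          (fun x hx => by
            by_contra hxT
            exact absurd (Finset.mem_sdiff.mpr ⟨hx, hxT⟩) (by simp [hA]))
          (fun x hx => by
            by_contra hxS
            exact absurd (Finset.mem_sdiff.mpr ⟨hx, hxS⟩) (by simp [hB])))
      · obtain ⟨x₀, hx₀, hbe⟩ := erase_of_swap X' b lam hlam (T \ S) (S \ T)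
          ((Finset.sdiff_subset).trans hT) ((Finset.sdiff_subset).trans hS)
          hdisj.symm hB hST.symm
        exact hnoerase x₀ hx₀ hbe
    · obtain ⟨x₀, hx₀, hbe⟩ := erase_of_swap X' b lam hlam (S \ T) (T \ S)
        ((Finset.sdiff_subset).trans hS) ((Finset.sdiff_subset).trans hT)
        hdisj hA hST
      exact hnoerase x₀ hx₀ hbe
  -- counting: 2^t ≤ (2tM+1)^d
  have hcount : 2 ^ t ≤ (2 * t * M + 1) ^ d := by
    have hmaps : ∀ S ∈ X'.powerset,
        (fun i => ∑ x ∈ S, x i) ∈ Fintype.piFinset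
          (fun _ : Fin d => Finset.Icc (-(t * M : ℤ)) (t * M)) := by
      intro S hS
      rw [Finset.mem_powerset] at hS
      rw [Fintype.mem_piFinset]
      intro i
      rw [Finset.mem_Icc]
      have habs : |∑ x ∈ S, x i| ≤ (t * M : ℤ) := by
        calc |∑ x ∈ S, x i| ≤ ∑ x ∈ S, |x i| := Finset.abs_sum_le_sum_abs _ _
          _ ≤ ∑ _x ∈ S, (M : ℤ) := by
              refine Finset.sum_le_sum fun x hx => ?_
              have hx' : x ∈ X := hX'X (hS hx)
              have h1 : (x i).natAbs ≤ M := by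
                calc (x i).natAbs ≤ Finset.univ.sup (fun j => (x j).natAbs) :=
                      Finset.le_sup (f := fun j => (x j).natAbs) (Finset.mem_univ i)
                  _ ≤ M := by
                      rw [hMdef]
                      exact Finset.le_sup (f := fun v => Finset.univ.sup fun j => (v j).natAbs) hx'
              rw [Int.abs_eq_natAbs]
              exact_mod_cast h1
          _ = (S.card : ℤ) * M := by rw [Finset.sum_const, nsmul_eq_mul]
          _ ≤ (t : ℤ) * M := by
              have := Finset.card_le_card hS
              have hM0 : (0:ℤ) ≤ (M:ℤ) := by positivity
              exact mul_le_mul_of_nonneg_right (by exact_mod_cast this) hM0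
      rw [abs_le] at habs
      exact habs
    have hcardle := Finset.card_le_card_of_injOn
      (fun (S : Finset (Fin d → ℤ)) (i : Fin d) => ∑ x ∈ S, x i) hmaps
      (by
        intro S hS T hT hfeq
        have hS' : S ∈ X'.powerset := by simpa using hS
        have hT' : T ∈ X'.powerset := by simpa using hT
        refine hinj S hS' T hT' ?_
        funext i
        simpa using congrFun hfeq i)
    rw [Finset.card_powerset, Fintype.card_piFinset] at hcardle
    have hc2 : (Finset.Icc (-(t * M : ℤ)) (t * M)).card = 2 * t * M + 1 := by
      rw [Int.card_Icc]
      have heq : (t * M : ℤ) + 1 - (-(t * M : ℤ)) = ((2 * t * M + 1 : ℕ) : ℤ) := by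
        push_cast; ring
      rw [heq, Int.toNat_natCast]
    simp only [hc2, Finset.prod_const, Finset.card_univ, Fintype.card_fin] at hcardle
    exact hcardle
  -- finish with real analysis
  have hM1 : 1 ≤ M := hX
  rcases Nat.eq_zero_or_pos t with ht0 | ht1
  · rw [ht0]
    push_cast
    have : (0:ℝ) ≤ Real.logb 2 (4 * d * M) := by
      apply Real.logb_nonneg (by norm_num)
      have : (1:ℝ) ≤ (d:ℝ) * M := by
        have : 1 ≤ d * M := Nat.one_le_iff_ne_zero.mpr (by positivity)
        exact_mod_cast this
      nlinarith
    positivity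
  · -- 2^t ≤ (4 t M)^d  in ℝ, then take logb
    have h4 : (2:ℝ) ^ (t:ℝ) ≤ ((4 * (t * M) : ℝ)) ^ (d:ℕ) := by
      have h1 : (2:ℕ) * t * M + 1 ≤ 4 * t * M := by nlinarith
      have h2 : (2:ℕ) ^ t ≤ (4 * t * M) ^ d := hcount.trans (Nat.pow_le_pow_left h1 d)
      have := (Nat.cast_le (α := ℝ)).mpr h2
      push_cast at this
      rw [Real.rpow_natCast]
      calc (2:ℝ) ^ t ≤ ((4 * t * M : ℕ) : ℝ) ^ d := by push_cast at this ⊢; linarith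
        _ = (4 * ((t:ℝ) * M)) ^ d := by push_cast; ring
    have hlogstep : (t:ℝ) ≤ d * Real.logb 2 (4 * ((t:ℝ) * M)) := by
      have hpos : (0:ℝ) < 4 * ((t:ℝ) * M) := by
        have : (1:ℝ) ≤ (t:ℝ) := by exact_mod_cast ht1
        have : (1:ℝ) ≤ (M:ℝ) := by exact_mod_cast hM1
        positivity
      have := Real.logb_le_logb_of_le (b := 2) (by norm_num)
        (x := (2:ℝ) ^ (t:ℝ)) (by positivity) h4
      rw [Real.logb_rpow (by norm_num) (by norm_num)] at this
      rw [Real.logb_pow] at this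
      linarith
    exact real_step d M t (by exact_mod_cast hd) (by exact_mod_cast hM1)
      (by exact_mod_cast ht1) hlogstep
end

section
/- Let G ≤ S_d be a transitive permutation group, and let V be a G-VASS with configurations s = q(v) and t = q'(v'). Suppose: (1) V has a Z-run from s to t (a run where intermediate vectors may take values in ℤ^d); (2) V has a run q(v) → q(v + e) for some e with all coordinates ≥ 1; and (3) V has a run q'(v' + e') → q'(v') for some e' with all coordinates ≥ 1. Then V has a (genuine, nonnegative) run from s to t. -/
/-- A transition of a `d`-dimensional VASS with states `Q`. -/
abbrev VTrans (Q : Type) (d : ℕ) := Q × (Fin d → ℤ) × Q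

/-- A step of a VASS between nonnegative configurations. -/
def VStep {Q : Type} {d : ℕ} (T : Set (VTrans Q d)) (c c' : Q × (Fin d → ℤ)) : Prop :=
  (∀ i, 0 ≤ c.2 i) ∧ (∀ i, 0 ≤ c'.2 i) ∧ ∃ v, (c.1, v, c'.1) ∈ T ∧ c'.2 = c.2 + v

/-- A run of a VASS: a finite sequence of consecutive steps. -/
def VRun {Q : Type} {d : ℕ} (T : Set (VTrans Q d)) : (Q × (Fin d → ℤ)) → (Q × (Fin d → ℤ)) → Prop :=
  Relation.ReflTransGen (VStep T)

/-- A Z-step of a VASS: configuration vectors may be negative. -/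
def ZStep {Q : Type} {d : ℕ} (T : Set (VTrans Q d)) (c c' : Q × (Fin d → ℤ)) : Prop :=
  ∃ v, (c.1, v, c'.1) ∈ T ∧ c'.2 = c.2 + v

/-- A Z-run of a VASS. -/
def ZRun {Q : Type} {d : ℕ} (T : Set (VTrans Q d)) : (Q × (Fin d → ℤ)) → (Q × (Fin d → ℤ)) → Prop :=
  Relation.ReflTransGen (ZStep T)

namespace VassAux

variable {Q : Type} {d : ℕ}

/-- Action of a permutation on a vector. -/
def pact (σ : Equiv.Perm (Fin d)) (u : Fin d → ℤ) : Fin d → ℤ := fun i => u (σ⁻¹ i)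

lemma pact_add (σ : Equiv.Perm (Fin d)) (u w : Fin d → ℤ) :
    pact σ (u + w) = pact σ u + pact σ w := rfl

lemma pact_one (u : Fin d → ℤ) : pact (1 : Equiv.Perm (Fin d)) u = u := by
  funext i; simp [pact]

lemma vrun_shift {T : Set (VTrans Q d)} {c c' : Q × (Fin d → ℤ)} (h : VRun T c c')
    (x : Fin d → ℤ) (hx : ∀ i, 0 ≤ x i) :
    VRun T (c.1, c.2 + x) (c'.1, c'.2 + x) := by
  induction h with
  | refl => exact Relation.ReflTransGen.refl
  | tail _ hbc ih =>
      obtain ⟨h1, h2, u, hu, heq⟩ := hbc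
      exact ih.tail ⟨fun i => add_nonneg (h1 i) (hx i), fun i => add_nonneg (h2 i) (hx i),
        u, hu, by dsimp only; rw [heq]; abel⟩

lemma vrun_perm {T : Set (VTrans Q d)} {G : Subgroup (Equiv.Perm (Fin d))}
    (hG : ∀ σ ∈ G, ∀ t ∈ T, (t.1, (fun i => t.2.1 (σ⁻¹ i)), t.2.2) ∈ T)
    {σ : Equiv.Perm (Fin d)} (hσ : σ ∈ G) {c c' : Q × (Fin d → ℤ)} (h : VRun T c c') :
    VRun T (c.1, pact σ c.2) (c'.1, pact σ c'.2) := by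
  induction h with
  | refl => exact Relation.ReflTransGen.refl
  | tail _ hbc ih =>
      obtain ⟨h1, h2, u, hu, heq⟩ := hbc
      refine ih.tail ⟨fun i => h1 _, fun i => h2 _, pact σ u, hG σ hσ _ hu, ?_⟩
      dsimp only; rw [heq]; rfl

lemma zrun_shift {T : Set (VTrans Q d)} {c c' : Q × (Fin d → ℤ)} (h : ZRun T c c') :
    ∃ M : ℤ, ∀ x : Fin d → ℤ, (∀ i, M ≤ x i) → VRun T (c.1, c.2 + x) (c'.1, c'.2 + x) := by
  induction h using Relation.ReflTransGen.head_induction_on with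
  | refl => exact ⟨0, fun x hx => Relation.ReflTransGen.refl⟩
  | @head st mid hab _ ih =>
      obtain ⟨M, hM⟩ := ih
      obtain ⟨u, hu, heq⟩ := hab
      refine ⟨M ⊔ (∑ i, |st.2 i|) ⊔ (∑ i, |mid.2 i|), fun x hx => ?_⟩
      have hxM : ∀ i, M ≤ x i := fun i =>
        le_trans (le_sup_of_le_left le_sup_left) (hx i)
      have h1 : ∀ i, 0 ≤ st.2 i + x i := by
        intro i
        have h2 : |st.2 i| ≤ ∑ j, |st.2 j| :=
          Finset.single_le_sum (f := fun j => |st.2 j|) (fun j _ => abs_nonneg _) (Finset.mem_univ i)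
        have h3 : (∑ j, |st.2 j|) ≤ x i := le_trans (le_sup_of_le_left le_sup_right) (hx i)
        have := neg_abs_le (st.2 i)
        linarith
      have h2 : ∀ i, 0 ≤ mid.2 i + x i := by
        intro i
        have h2 : |mid.2 i| ≤ ∑ j, |mid.2 j| :=
          Finset.single_le_sum (f := fun j => |mid.2 j|) (fun j _ => abs_nonneg _) (Finset.mem_univ i)
        have h3 : (∑ j, |mid.2 j|) ≤ x i := le_trans le_sup_right (hx i)
        have := neg_abs_le (mid.2 i)
        linarith
      refine Relation.ReflTransGen.head (b := (mid.1, mid.2 + x))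
        ⟨h1, h2, u, hu, by dsimp only; rw [heq]; abel⟩ (hM x hxM)

lemma stepUp {T : Set (VTrans Q d)} {G : Subgroup (Equiv.Perm (Fin d))}
    (hG : ∀ σ ∈ G, ∀ t ∈ T, (t.1, (fun i => t.2.1 (σ⁻¹ i)), t.2.2) ∈ T)
    {p : Q} {b f : Fin d → ℤ} (hloop : VRun T (p, b) (p, b + f))
    {σ : Equiv.Perm (Fin d)} (hσ : σ ∈ G)
    (y : Fin d → ℤ) (hy : ∀ i, pact σ b i ≤ y i) :
    VRun T (p, y) (p, y + pact σ f) := by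
  have h1 := vrun_perm hG hσ hloop
  have h2 := vrun_shift h1 (y - pact σ b) (fun i => sub_nonneg.2 (hy i))
  have e1 : pact σ b + (y - pact σ b) = y := by abel
  have e2 : pact σ (b + f) + (y - pact σ b) = y + pact σ f := by rw [pact_add]; abel
  dsimp only at h2
  rwa [e1, e2] at h2

lemma stepDown {T : Set (VTrans Q d)} {G : Subgroup (Equiv.Perm (Fin d))}
    (hG : ∀ σ ∈ G, ∀ t ∈ T, (t.1, (fun i => t.2.1 (σ⁻¹ i)), t.2.2) ∈ T)
    {p : Q} {b f : Fin d → ℤ} (hloop : VRun T (p, b + f) (p, b))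
    {σ : Equiv.Perm (Fin d)} (hσ : σ ∈ G)
    (y : Fin d → ℤ) (hy : ∀ i, pact σ b i ≤ y i) :
    VRun T (p, y + pact σ f) (p, y) := by
  have h1 := vrun_perm hG hσ hloop
  have h2 := vrun_shift h1 (y - pact σ b) (fun i => sub_nonneg.2 (hy i))
  have e1 : pact σ b + (y - pact σ b) = y := by abel
  have e2 : pact σ (b + f) + (y - pact σ b) = y + pact σ f := by rw [pact_add]; abel
  dsimp only at h2
  rwa [e1, e2] at h2

lemma runUpSum {T : Set (VTrans Q d)} {G : Subgroup (Equiv.Perm (Fin d))}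
    (hG : ∀ σ ∈ G, ∀ t ∈ T, (t.1, (fun i => t.2.1 (σ⁻¹ i)), t.2.2) ∈ T)
    {p : Q} {b f : Fin d → ℤ} (hloop : VRun T (p, b) (p, b + f)) (hf : ∀ i, 0 ≤ f i)
    {B : ℤ} (hB : ∀ σ ∈ G, ∀ i, pact σ b i ≤ B)
    (s : Finset (Equiv.Perm (Fin d))) :
    (∀ σ ∈ s, σ ∈ G) → ∀ y : Fin d → ℤ, (∀ i, B ≤ y i) →
      VRun T (p, y) (p, y + ∑ σ ∈ s, pact σ f) := by
  classical
  induction s using Finset.induction_on with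
  | empty => intro _ y hy; simp only [Finset.sum_empty, add_zero]; exact Relation.ReflTransGen.refl
  | @insert σ s hσs ih =>
      intro hs y hy
      have hσG : σ ∈ G := hs σ (Finset.mem_insert_self σ s)
      have r1 : VRun T (p, y) (p, y + pact σ f) :=
        stepUp hG hloop hσG y (fun i => (hB σ hσG i).trans (hy i))
      have hy2 : ∀ i, B ≤ (y + pact σ f) i := by
        intro i
        have := hf (σ⁻¹ i)
        have := hy i
        show B ≤ y i + f (σ⁻¹ i)
        linarith
      have r2 := ih (fun τ hτ => hs τ (Finset.mem_insert_of_mem hτ)) (y + pact σ f) hy2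
      have : y + pact σ f + ∑ τ ∈ s, pact τ f = y + ∑ τ ∈ insert σ s, pact τ f := by
        rw [Finset.sum_insert hσs]; abel
      exact r1.trans (this ▸ r2)

lemma runDownSum {T : Set (VTrans Q d)} {G : Subgroup (Equiv.Perm (Fin d))}
    (hG : ∀ σ ∈ G, ∀ t ∈ T, (t.1, (fun i => t.2.1 (σ⁻¹ i)), t.2.2) ∈ T)
    {p : Q} {b f : Fin d → ℤ} (hloop : VRun T (p, b + f) (p, b)) (hf : ∀ i, 0 ≤ f i)
    {B : ℤ} (hB : ∀ σ ∈ G, ∀ i, pact σ b i ≤ B)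
    (s : Finset (Equiv.Perm (Fin d))) :
    (∀ σ ∈ s, σ ∈ G) → ∀ y : Fin d → ℤ, (∀ i, B ≤ y i) →
      VRun T (p, y + ∑ σ ∈ s, pact σ f) (p, y) := by
  classical
  induction s using Finset.induction_on with
  | empty => intro _ y hy; simp only [Finset.sum_empty, add_zero]; exact Relation.ReflTransGen.refl
  | @insert σ s hσs ih =>
      intro hs y hy
      have hσG : σ ∈ G := hs σ (Finset.mem_insert_self σ s)
      have r2 : VRun T (p, y + pact σ f) (p, y) :=
        stepDown hG hloop hσG y (fun i => (hB σ hσG i).trans (hy i))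
      have hy2 : ∀ i, B ≤ (y + pact σ f) i := by
        intro i
        have := hf (σ⁻¹ i)
        have := hy i
        show B ≤ y i + f (σ⁻¹ i)
        linarith
      have r1 := ih (fun τ hτ => hs τ (Finset.mem_insert_of_mem hτ)) (y + pact σ f) hy2
      have : y + pact σ f + ∑ τ ∈ s, pact τ f = y + ∑ τ ∈ insert σ s, pact τ f := by
        rw [Finset.sum_insert hσs]; abel
      exact (this ▸ r1).trans r2

lemma runUpN {T : Set (VTrans Q d)} {p : Q} {g : Fin d → ℤ} {B : ℤ}
    (hg : ∀ i, 0 ≤ g i)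
    (h1 : ∀ y : Fin d → ℤ, (∀ i, B ≤ y i) → VRun T (p, y) (p, y + g)) :
    ∀ (n : ℕ) (y : Fin d → ℤ), (∀ i, B ≤ y i) → VRun T (p, y) (p, y + n • g) := by
  intro n
  induction n with
  | zero => intro y hy; simp only [zero_nsmul, add_zero]; exact Relation.ReflTransGen.refl
  | succ n ih =>
      intro y hy
      have hy2 : ∀ i, B ≤ (y + g) i := by
        intro i; have := hg i; have := hy i; show B ≤ y i + g i; linarith
      have r2 := ih (y + g) hy2
      have : y + g + n • g = y + (n + 1) • g := by rw [succ_nsmul]; abel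
      exact (h1 y hy).trans (this ▸ r2)

lemma runDownN {T : Set (VTrans Q d)} {p : Q} {g : Fin d → ℤ} {B : ℤ}
    (hg : ∀ i, 0 ≤ g i)
    (h1 : ∀ y : Fin d → ℤ, (∀ i, B ≤ y i) → VRun T (p, y + g) (p, y)) :
    ∀ (n : ℕ) (y : Fin d → ℤ), (∀ i, B ≤ y i) → VRun T (p, y + n • g) (p, y) := by
  intro n
  induction n with
  | zero => intro y hy; simp only [zero_nsmul, add_zero]; exact Relation.ReflTransGen.refl
  | succ n ih =>
      intro y hy
      have hy2 : ∀ i, B ≤ (y + g) i := by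
        intro i; have := hg i; have := hy i; show B ≤ y i + g i; linarith
      have r1 := ih (y + g) hy2
      have : y + g + n • g = y + (n + 1) • g := by rw [succ_nsmul]; abel
      exact (this ▸ r1).trans (h1 y hy)

lemma rampUp {T : Set (VTrans Q d)} {G : Subgroup (Equiv.Perm (Fin d))}
    (hG : ∀ σ ∈ G, ∀ t ∈ T, (t.1, (fun i => t.2.1 (σ⁻¹ i)), t.2.2) ∈ T)
    {p : Q} {b f : Fin d → ℤ} (hloop : VRun T (p, b) (p, b + f)) (hf : ∀ i, 0 ≤ f i) :
    ∀ k : ℕ, VRun T (p, b) (p, b + k • f) := by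
  intro k
  induction k with
  | zero => simp only [zero_nsmul, add_zero]; exact Relation.ReflTransGen.refl
  | succ k ih =>
      have hy : ∀ i, pact (1 : Equiv.Perm (Fin d)) b i ≤ (b + k • f) i := by
        intro i
        have := hf i
        have : (0 : ℤ) ≤ (k • f) i := by
          show (0:ℤ) ≤ k • f i
          positivity
        show b i ≤ b i + (k • f) i
        linarith
      have r := stepUp hG hloop G.one_mem (b + k • f) hy
      rw [pact_one] at r
      have : b + k • f + f = b + (k + 1) • f := by rw [succ_nsmul]; abel
      exact ih.trans (this ▸ r)

lemma rampDown {T : Set (VTrans Q d)} {G : Subgroup (Equiv.Perm (Fin d))}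
    (hG : ∀ σ ∈ G, ∀ t ∈ T, (t.1, (fun i => t.2.1 (σ⁻¹ i)), t.2.2) ∈ T)
    {p : Q} {b f : Fin d → ℤ} (hloop : VRun T (p, b + f) (p, b)) (hf : ∀ i, 0 ≤ f i) :
    ∀ k : ℕ, VRun T (p, b + k • f) (p, b) := by
  intro k
  induction k with
  | zero => simp only [zero_nsmul, add_zero]; exact Relation.ReflTransGen.refl
  | succ k ih =>
      have hy : ∀ i, pact (1 : Equiv.Perm (Fin d)) b i ≤ (b + k • f) i := by
        intro i
        have := hf i
        have : (0 : ℤ) ≤ (k • f) i := by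
          show (0:ℤ) ≤ k • f i
          positivity
        show b i ≤ b i + (k • f) i
        linarith
      have r := stepDown hG hloop G.one_mem (b + k • f) hy
      rw [pact_one] at r
      have : b + k • f + f = b + (k + 1) • f := by rw [succ_nsmul]; abel
      exact (this ▸ r).trans ih

lemma sum_pact_const {G : Subgroup (Equiv.Perm (Fin d))}
    (htrans : ∀ i j : Fin d, ∃ σ ∈ G, σ i = j) (f : Fin d → ℤ)
    (𝒢 : Finset (Equiv.Perm (Fin d))) (h𝒢 : ∀ σ, σ ∈ 𝒢 ↔ σ ∈ G)
    (i j : Fin d) : (∑ σ ∈ 𝒢, pact σ f) i = (∑ σ ∈ 𝒢, pact σ f) j := by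
  obtain ⟨τ, hτ, hij⟩ := htrans i j
  rw [Finset.sum_apply, Finset.sum_apply]
  refine Finset.sum_equiv (Equiv.mulLeft τ) (fun ρ => ?_) (fun ρ hρ => ?_)
  · constructor
    · intro h; exact (h𝒢 _).2 (G.mul_mem hτ ((h𝒢 _).1 h))
    · intro h
      have : ρ = τ⁻¹ * (τ * ρ) := by group
      rw [this]
      exact (h𝒢 _).2 (G.mul_mem (G.inv_mem hτ) ((h𝒢 _).1 h))
  · show f (ρ⁻¹ i) = f ((τ * ρ)⁻¹ j)
    have : (τ * ρ)⁻¹ j = ρ⁻¹ (τ⁻¹ j) := by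
      rw [mul_inv_rev]; rfl
    rw [this]
    have hj : τ⁻¹ j = i := by
      rw [← hij]; simp
    rw [hj]

end VassAux

open VassAux

set_option maxHeartbeats 2000000 in
/-- Lemma 3: for a transitive group `G ≤ S_d` and a pumpable
`G`-VASS, a Z-run from `s` to `t` implies a genuine run from `s` to `t`. -/
theorem reach_of_zreach_pumpable {Q : Type} {d : ℕ} (T : Set (VTrans Q d))
    (G : Subgroup (Equiv.Perm (Fin d)))
    (htrans : ∀ i j : Fin d, ∃ σ ∈ G, σ i = j)
    (hG : ∀ σ ∈ G, ∀ t ∈ T, (t.1, (fun i => t.2.1 (σ⁻¹ i)), t.2.2) ∈ T)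
    (q q' : Q) (v v' : Fin d → ℤ)
    (hv : ∀ i, 0 ≤ v i) (hv' : ∀ i, 0 ≤ v' i)
    (hz : ZRun T (q, v) (q', v'))
    (e : Fin d → ℤ) (he : ∀ i, 1 ≤ e i) (hfwd : VRun T (q, v) (q, v + e))
    (e' : Fin d → ℤ) (he' : ∀ i, 1 ≤ e' i) (hbwd : VRun T (q', v' + e') (q', v')) :
    VRun T (q, v) (q', v') := by
  classical
  rcases Nat.eq_zero_or_pos d with hd | hd
  · subst hd
    refine Relation.ReflTransGen.mono (fun s t hst => ?_) _ _ hz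
    obtain ⟨u, hu, heq⟩ := hst
    exact ⟨fun i => i.elim0, fun i => i.elim0, u, hu, heq⟩
  · have hf0e : ∀ i, 0 ≤ e i := fun i => by linarith [he i]
    have hf0e' : ∀ i, 0 ≤ e' i := fun i => by linarith [he' i]
    set 𝒢 : Finset (Equiv.Perm (Fin d)) := Finset.univ.filter (· ∈ G) with h𝒢def
    have h𝒢 : ∀ σ, σ ∈ 𝒢 ↔ σ ∈ G := fun σ => by simp [h𝒢def]
    have h1𝒢 : (1 : Equiv.Perm (Fin d)) ∈ 𝒢 := (h𝒢 1).2 G.one_mem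
    set Φ : Fin d → ℤ := ∑ σ ∈ 𝒢, pact σ e with hΦdef
    set Φ' : Fin d → ℤ := ∑ σ ∈ 𝒢, pact σ e' with hΦ'def
    set i₀ : Fin d := ⟨0, hd⟩ with hi₀
    set c : ℤ := Φ i₀ with hcdef
    set c' : ℤ := Φ' i₀ with hc'def
    have hΦc : ∀ i, Φ i = c := fun i => sum_pact_const htrans e 𝒢 h𝒢 i i₀
    have hΦ'c : ∀ i, Φ' i = c' := fun i => sum_pact_const htrans e' 𝒢 h𝒢 i i₀
    have hΦapp : ∀ i, Φ i = ∑ σ ∈ 𝒢, e (σ⁻¹ i) := fun i => Finset.sum_apply i 𝒢 _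
    have hΦ'app : ∀ i, Φ' i = ∑ σ ∈ 𝒢, e' (σ⁻¹ i) := fun i => Finset.sum_apply i 𝒢 _
    have hc1 : 1 ≤ c := by
      have h1 : e ((1 : Equiv.Perm (Fin d))⁻¹ i₀) ≤ ∑ σ ∈ 𝒢, e (σ⁻¹ i₀) :=
        Finset.single_le_sum (f := fun σ => e (σ⁻¹ i₀))
          (fun σ _ => by have := he (σ⁻¹ i₀); linarith) h1𝒢
      have h2 := he ((1 : Equiv.Perm (Fin d))⁻¹ i₀)
      have h3 := hΦapp i₀
      rw [hΦc i₀] at h3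
      linarith
    have hc'1 : 1 ≤ c' := by
      have h1 : e' ((1 : Equiv.Perm (Fin d))⁻¹ i₀) ≤ ∑ σ ∈ 𝒢, e' (σ⁻¹ i₀) :=
        Finset.single_le_sum (f := fun σ => e' (σ⁻¹ i₀))
          (fun σ _ => by have := he' (σ⁻¹ i₀); linarith) h1𝒢
      have h2 := he' ((1 : Equiv.Perm (Fin d))⁻¹ i₀)
      have h3 := hΦ'app i₀
      rw [hΦ'c i₀] at h3
      linarith
    have hΦ0 : ∀ i, 0 ≤ Φ i := fun i => by rw [hΦc i]; linarith
    have hΦ'0 : ∀ i, 0 ≤ Φ' i := fun i => by rw [hΦ'c i]; linarith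
    set B : ℤ := ∑ j, v j with hBdef
    set B' : ℤ := ∑ j, v' j with hB'def
    have hBv : ∀ σ ∈ G, ∀ i, pact σ v i ≤ B := fun σ _ i =>
      Finset.single_le_sum (f := fun j => v j) (fun j _ => hv j) (Finset.mem_univ (σ⁻¹ i))
    have hB'v : ∀ σ ∈ G, ∀ i, pact σ v' i ≤ B' := fun σ _ i =>
      Finset.single_le_sum (f := fun j => v' j) (fun j _ => hv' j) (Finset.mem_univ (σ⁻¹ i))
    obtain ⟨M, hM⟩ := zrun_shift hz
    set a : ℕ := (B ⊔ B' ⊔ M ⊔ 1).toNat with hadef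
    have hkey0 : B ⊔ B' ⊔ M ⊔ 1 ≤ (a : ℤ) := Int.self_le_toNat _
    have haB : B ≤ (a : ℤ) :=
      le_trans (le_sup_of_le_left (le_sup_of_le_left le_sup_left)) hkey0
    have haB' : B' ≤ (a : ℤ) :=
      le_trans (le_sup_of_le_left (le_sup_of_le_left le_sup_right)) hkey0
    have haM : M ≤ (a : ℤ) := le_trans (le_sup_of_le_left le_sup_right) hkey0
    have ha0 : (0 : ℤ) ≤ (a : ℤ) := Int.natCast_nonneg a
    set cn : ℕ := c.toNat with hcndef
    set cn' : ℕ := c'.toNat with hcn'def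
    have hcnz : (cn : ℤ) = c := Int.toNat_of_nonneg (by linarith)
    have hcn'z : (cn' : ℤ) = c' := Int.toNat_of_nonneg (by linarith)
    have hcn1 : 1 ≤ cn := by
      have h : (1 : ℤ) ≤ (cn : ℤ) := by rw [hcnz]; exact hc1
      exact_mod_cast h
    have hcn'1 : 1 ≤ cn' := by
      have h : (1 : ℤ) ≤ (cn' : ℤ) := by rw [hcn'z]; exact hc'1
      exact_mod_cast h
    -- ascent
    set g₁ : Fin d → ℤ := ∑ σ ∈ 𝒢.erase 1, pact σ e with hg₁def
    have hg₁0 : ∀ i, 0 ≤ g₁ i := by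
      intro i
      rw [hg₁def, Finset.sum_apply]
      exact Finset.sum_nonneg (fun σ _ => hf0e (σ⁻¹ i))
    have hsplit1 : e + g₁ = Φ := by
      rw [hΦdef, ← Finset.add_sum_erase 𝒢 (fun σ => pact σ e) h1𝒢, pact_one, hg₁def]
    have A1 : VRun T (q, v) (q, v + a • e) := rampUp hG hfwd hf0e a
    have hy₁ : ∀ i, B ≤ (v + a • e) i := by
      intro i
      have h := mul_le_mul_of_nonneg_left (he i) ha0
      have := hv i
      show B ≤ v i + a • e i
      rw [nsmul_eq_mul]
      linarith
    have h1up : ∀ y : Fin d → ℤ, (∀ i, B ≤ y i) → VRun T (q, y) (q, y + g₁) := fun y hy =>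
      runUpSum hG hfwd hf0e hBv (𝒢.erase 1)
        (fun σ hσ => (h𝒢 σ).1 (Finset.mem_of_mem_erase hσ)) y hy
    have A2 : VRun T (q, v + a • e) (q, v + a • e + a • g₁) :=
      runUpN hg₁0 h1up a (v + a • e) hy₁
    have heq12 : v + a • e + a • g₁ = v + a • Φ := by
      rw [← hsplit1, smul_add]
      abel
    have h1upΦ : ∀ y : Fin d → ℤ, (∀ i, B ≤ y i) → VRun T (q, y) (q, y + Φ) := fun y hy =>
      runUpSum hG hfwd hf0e hBv 𝒢 (fun σ hσ => (h𝒢 σ).1 hσ) y hy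
    have hy₂ : ∀ i, B ≤ (v + a • Φ) i := by
      intro i
      have h := mul_le_mul_of_nonneg_left hc1 ha0
      have := hv i
      show B ≤ v i + a • Φ i
      rw [nsmul_eq_mul, hΦc i]
      linarith
    have A3 : VRun T (q, v + a • Φ) (q, v + a • Φ + (a * cn' - a) • Φ) :=
      runUpN hΦ0 h1upΦ (a * cn' - a) (v + a • Φ) hy₂
    have hle : a ≤ a * cn' := Nat.le_mul_of_pos_right a (by omega)
    have heq3 : v + a • Φ + (a * cn' - a) • Φ = v + (a * cn') • Φ := by
      rw [add_assoc, ← add_nsmul, Nat.add_sub_cancel' hle]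
    -- middle
    have hMx : ∀ i, M ≤ ((a * cn') • Φ) i := by
      intro i
      show M ≤ (a * cn') • Φ i
      rw [nsmul_eq_mul, hΦc i]
      push_cast
      nlinarith [hcn'z, hc'1, hc1, haM, ha0]
    have Mid : VRun T (q, v + (a * cn') • Φ) (q', v' + (a * cn') • Φ) :=
      hM ((a * cn') • Φ) hMx
    have xswap : (a * cn') • Φ = (a * cn) • Φ' := by
      funext i
      show (a * cn') • Φ i = (a * cn) • Φ' i
      rw [nsmul_eq_mul, nsmul_eq_mul, hΦc i, hΦ'c i]
      push_cast
      rw [hcnz, hcn'z]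
      ring
    -- descent
    set g₂ : Fin d → ℤ := ∑ σ ∈ 𝒢.erase 1, pact σ e' with hg₂def
    have hg₂0 : ∀ i, 0 ≤ g₂ i := by
      intro i
      rw [hg₂def, Finset.sum_apply]
      exact Finset.sum_nonneg (fun σ _ => hf0e' (σ⁻¹ i))
    have hsplit2 : e' + g₂ = Φ' := by
      rw [hΦ'def, ← Finset.add_sum_erase 𝒢 (fun σ => pact σ e') h1𝒢, pact_one, hg₂def]
    have D0 : VRun T (q', v' + a • e') (q', v') := rampDown hG hbwd hf0e' a
    have hy₁' : ∀ i, B' ≤ (v' + a • e') i := by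
      intro i
      have h := mul_le_mul_of_nonneg_left (he' i) ha0
      have := hv' i
      show B' ≤ v' i + a • e' i
      rw [nsmul_eq_mul]
      linarith
    have h1dn : ∀ y : Fin d → ℤ, (∀ i, B' ≤ y i) → VRun T (q', y + g₂) (q', y) := fun y hy =>
      runDownSum hG hbwd hf0e' hB'v (𝒢.erase 1)
        (fun σ hσ => (h𝒢 σ).1 (Finset.mem_of_mem_erase hσ)) y hy
    have D1 : VRun T (q', v' + a • e' + a • g₂) (q', v' + a • e') :=
      runDownN hg₂0 h1dn a (v' + a • e') hy₁'
    have heq12' : v' + a • e' + a • g₂ = v' + a • Φ' := by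
      rw [← hsplit2, smul_add]
      abel
    have h1dnΦ' : ∀ y : Fin d → ℤ, (∀ i, B' ≤ y i) → VRun T (q', y + Φ') (q', y) := fun y hy =>
      runDownSum hG hbwd hf0e' hB'v 𝒢 (fun σ hσ => (h𝒢 σ).1 hσ) y hy
    have hy₂' : ∀ i, B' ≤ (v' + a • Φ') i := by
      intro i
      have h := mul_le_mul_of_nonneg_left hc'1 ha0
      have := hv' i
      show B' ≤ v' i + a • Φ' i
      rw [nsmul_eq_mul, hΦ'c i]
      linarith
    have D2 : VRun T (q', v' + a • Φ' + (a * cn - a) • Φ') (q', v' + a • Φ') :=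
      runDownN hΦ'0 h1dnΦ' (a * cn - a) (v' + a • Φ') hy₂'
    have hle' : a ≤ a * cn := Nat.le_mul_of_pos_right a (by omega)
    have heq3' : v' + a • Φ' + (a * cn - a) • Φ' = v' + (a * cn) • Φ' := by
      rw [add_assoc, ← add_nsmul, Nat.add_sub_cancel' hle']
    -- assemble
    rw [heq12] at A2
    rw [heq3] at A3
    have Asc : VRun T (q, v) (q, v + (a * cn') • Φ) := (A1.trans A2).trans A3
    rw [heq12'] at D1
    rw [heq3'] at D2
    have Dsc : VRun T (q', v' + (a * cn) • Φ') (q', v') := (D2.trans D1).trans D0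
    rw [← xswap] at Dsc
    exact (Asc.trans Mid).trans Dsc
end
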